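/- arXiv:2512.18058 — 5 statements merged into one kernel-verified Lean document; each statement's English description precedes it below -/
import Mathlib

section
/- Let X be a real Banach lattice, let E ⊆ X be a (real) linear subspace, let f ∈ E, and let C > 0. Then the following are equivalent: (1) for every g ∈ E one has min(‖f − g‖, ‖f + g‖) ≤ C · ‖ |f| − |g| ‖ (i.e., C-local stable phase retrieval holds at f in E); (2) there do not exist g, h ∈ E with f = g + h and ‖ |g| ⊓ |h| ‖ < C⁻¹ · min(‖g‖, ‖h‖). -/
/-!
Write `f = u + v` and `g = u - v`. In a lattice-ordered group `||u + v| - |u - v|| = 2 (|u| ⊓ |v|)`,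
so by solidity of the norm the stability inequality at `g` reads
`2 min(‖u‖, ‖v‖) ≤ 2 C ‖|u| ⊓ |v|‖`. As `g` ranges over `E`, `(u, v) = ((f + g)/2, (f - g)/2)` ranges
over all decompositions of `f` in `E`, so stability at every `g` says exactly that no decomposition
violates this inequality.
-/

section LatticeOrderedGroup

variable {α : Type*} [Lattice α] [AddCommGroup α] [IsOrderedAddMonoid α]

theorem two_nsmul_sup (a b : α) : 2 • (a ⊔ b) = 2 • a ⊔ 2 • b := by
  rw [two_nsmul_sup_eq_add_add_abs_sub, abs, add_sup, sup_comm]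
  congr 1 <;> abel

theorem abs_two_nsmul (a : α) : |2 • a| = 2 • |a| := by
  rw [abs, abs, two_nsmul_sup, smul_neg]

theorem abs_add_sup_abs_sub (a b : α) : |a + b| ⊔ |a - b| = |a| + |b| := by
  simp only [abs, sup_add, add_sup, neg_add, sub_eq_add_neg, neg_neg]
  ac_rfl

theorem abs_add_add_abs_sub (a b : α) : |a + b| + |a - b| = 2 • (|a| ⊔ |b|) := by
  have h := abs_add_sup_abs_sub (a + b) (a - b)
  rw [show a + b + (a - b) = 2 • a by abel, show a + b - (a - b) = 2 • b by abel,
    abs_two_nsmul, abs_two_nsmul] at h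
  rw [← h, two_nsmul_sup]

theorem abs_abs_add_sub_abs_sub (a b : α) : |(|a + b| - |a - b|)| = 2 • (|a| ⊓ |b|) := by
  -- `|s - t| = 2 (s ⊔ t) - (s + t)`, where `s ⊔ t = |a| + |b|` and `s + t = 2 (|a| ⊔ |b|)`
  have h := two_nsmul_sup_eq_add_add_abs_sub |a + b| |a - b|
  rw [abs_add_sup_abs_sub, abs_add_add_abs_sub, abs_sub_comm] at h
  rw [eq_sub_of_add_eq' h.symm, ← nsmul_sub, ← inf_add_sup |a| |b|, add_sub_cancel_right]

end LatticeOrderedGroup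

theorem Submodule.exists_add_eq_and_sub_eq {K V : Type*} [DivisionRing K] [NeZero (2 : K)]
    [AddCommGroup V] [Module K V] (E : Submodule K V) {f g : V} (hf : f ∈ E) (hg : g ∈ E) :
    ∃ u ∈ E, ∃ v ∈ E, f = u + v ∧ g = u - v := by
  refine ⟨(2 : K)⁻¹ • (f + g), E.smul_mem _ (E.add_mem hf hg),
    (2 : K)⁻¹ • (f - g), E.smul_mem _ (E.sub_mem hf hg), ?_, ?_⟩
  · rw [← smul_add, show f + g + (f - g) = (2 : K) • f by rw [two_smul]; abel, smul_smul,
      inv_mul_cancel₀ two_ne_zero, one_smul]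
  · rw [← smul_sub, show f + g - (f - g) = (2 : K) • g by rw [two_smul]; abel, smul_smul,
      inv_mul_cancel₀ two_ne_zero, one_smul]

section NormedLattice

variable {X : Type*} [NormedAddCommGroup X] [Lattice X] [HasSolidNorm X] [IsOrderedAddMonoid X]
  [NormedSpace ℝ X]

theorem norm_abs_add_sub_abs_sub (u v : X) : ‖|u + v| - |u - v|‖ = 2 * ‖|u| ⊓ |v|‖ := by
  rw [← norm_abs_eq_norm, abs_abs_add_sub_abs_sub, RCLike.norm_nsmul ℝ, nsmul_eq_mul, Nat.cast_ofNat]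

theorem min_norm_sub_norm_add_le_mul_iff (u v : X) (C : ℝ) :
    min ‖u + v - (u - v)‖ ‖u + v + (u - v)‖ ≤ C * ‖|u + v| - |u - v|‖ ↔
      min ‖u‖ ‖v‖ ≤ C * ‖|u| ⊓ |v|‖ := by
  rw [show u + v - (u - v) = 2 • v by abel, show u + v + (u - v) = 2 • u by abel,
    RCLike.norm_nsmul ℝ, RCLike.norm_nsmul ℝ, norm_abs_add_sub_abs_sub, nsmul_eq_mul,
    nsmul_eq_mul, Nat.cast_ofNat, ← mul_min_of_nonneg _ _ zero_le_two, min_comm,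
    mul_left_comm, mul_le_mul_iff_right₀ zero_lt_two]

end NormedLattice

theorem local_stable_phase_retrieval_iff_no_almost_disjoint_decomposition_general
    {X : Type*} [NormedAddCommGroup X] [Lattice X] [HasSolidNorm X] [IsOrderedAddMonoid X] [NormedSpace ℝ X]
    (E : Submodule ℝ X) (f : X) (hf : f ∈ E) (C : ℝ) (hC : 0 < C) :
    (∀ g ∈ E, min ‖f - g‖ ‖f + g‖ ≤ C * ‖|f| - |g|‖) ↔
      ¬ ∃ g ∈ E, ∃ h ∈ E, f = g + h ∧ ‖|g| ⊓ |h|‖ < C⁻¹ * min ‖g‖ ‖h‖ := by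
  constructor
  · rintro hstable ⟨g, hg, h, hh, rfl, hlt⟩
    have hgh := (min_norm_sub_norm_add_le_mul_iff g h C).1 (hstable (g - h) (E.sub_mem hg hh))
    exact hlt.not_ge ((inv_mul_le_iff₀ hC).2 hgh)
  · intro hno g hg
    obtain ⟨u, hu, v, hv, rfl, rfl⟩ := E.exists_add_eq_and_sub_eq hf hg
    refine (min_norm_sub_norm_add_le_mul_iff u v C).2 ((inv_mul_le_iff₀ hC).1 (not_lt.1 ?_))
    exact fun hlt => hno ⟨u, hu, v, hv, rfl, hlt⟩

/-- **Theorem (characterization of local stable phase retrieval in real Banach lattices).**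
Let `X` be a real Banach lattice, `E ⊆ X` a linear subspace, `f ∈ E` and `C > 0`.
Then `C`-local stable phase retrieval holds at `f` in `E`
(i.e. `min(‖f − g‖, ‖f + g‖) ≤ C‖|f| − |g|‖` for all `g ∈ E`) if and only if
there are no `g, h ∈ E` with `f = g + h` and `‖|g| ⊓ |h|‖ < C⁻¹ min(‖g‖, ‖h‖)`. -/
theorem local_stable_phase_retrieval_iff_no_almost_disjoint_decomposition
    {X : Type*} [NormedAddCommGroup X] [Lattice X] [HasSolidNorm X] [IsOrderedAddMonoid X] [NormedSpace ℝ X] [CompleteSpace X]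
    (E : Submodule ℝ X) (f : X) (hf : f ∈ E) (C : ℝ) (hC : 0 < C) :
    (∀ g ∈ E, min ‖f - g‖ ‖f + g‖ ≤ C * ‖|f| - |g|‖) ↔
      ¬ ∃ g ∈ E, ∃ h ∈ E, f = g + h ∧ ‖|g| ⊓ |h|‖ < C⁻¹ * min ‖g‖ ‖h‖ :=
  local_stable_phase_retrieval_iff_no_almost_disjoint_decomposition_general E f hf C hC
end

section
/- Let d ≥ 1, σ ≥ 0, p ∈ [1, ∞), q ∈ [1, ∞]. Let h : ℝ^d → ℂ be measurable with ‖⟨·⟩^{2σ} h‖_{L^p(ℝ^d)} < ∞ and ‖h‖_{L^q(B(0,1))} ≥ 1 and ‖h‖_{L^p(B(0,1))} ≥ 1. Let (j_n)_{n ≥ 1} be integers with j_1 ≥ 2, j_{n+1} ≥ 3 j_n for all n, and suppose ‖⟨·⟩^{2σ} h‖_{L^p(\{|x| ≥ j_n/2\})} ≤ 2^{−3n} for all n. Set A_n := {x ∈ ℝ^d : j_n ≤ |x| ≤ 2 j_n} and ε_n(x) := 2^{−n} ⟨j_n⟩^{−σ} h(x − (3/2) j_n e₁), where e₁ is the first standard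 basis vector and ⟨j⟩ := (1 + j²)^{1/2}. Then for all n ≥ 1: (1) ‖⟨·⟩^σ ε_n‖_{L^p(ℝ^d)} ≤ 5^σ · 2^{−n} · ‖⟨·⟩^σ h‖_{L^p(ℝ^d)} and ‖ε_n‖_{L^q(ℝ^d)} = 2^{−n} ⟨j_n⟩^{−σ} ‖h‖_{L^q(ℝ^d)}; (2) ‖ε_n‖_{L^q(A_n)} ≥ 2^{−n} ⟨j_n⟩^{−σ}; (3) ‖⟨·⟩^σ ε_n‖_{L^p(ℝ^d ∖ A_n)} ≤ 5^σ · 2^{−4n} ⟨j_n⟩^{−σ}; (4) for every 1 ≤ ℓ < n, ‖⟨·⟩^σ ε_ℓ‖_{L^p(A_n)} ≤ 5^σ · 2^{−3n} ⟨j_n⟩^{−σ}. -/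
/-!
Write `ε_n = c_n • h(· - v_n)` with `c_n = 2^{-n}⟨j_n⟩^{-σ}` and `‖v_n‖ = 3 j_n / 2`. Translation
invariance of Lebesgue measure turns every norm of `ε_n` into a norm of `h` on a translated set,
so the only analytic input is a Peetre-type inequality: if `‖x‖ ≤ ‖y‖ + 3J/2` then
`⟨x⟩² ≤ (9/2) ⟨J⟩² ⟨y⟩²`, whence `⟨x⟩^σ ⟨J⟩^{-σ} ≤ 5^σ ⟨y⟩^σ`. Since `j_n ≥ 2`, the unit ball around
`v_n` lies in the annulus `A_n`, which gives the lower bound; off `A_n`, and on `A_n` for the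
earlier bumps (as `j_n ≥ 3 j_l`), the translated point `y = x - v` satisfies `‖y‖ ≥ j_n / 2`,
so `⟨j_n⟩ ≤ 2⟨y⟩` trades the factor `⟨j_n⟩^σ` for one more power of `⟨y⟩^σ`, and the tail
hypothesis on `⟨·⟩^{2σ} h` finishes.
-/

open MeasureTheory ENNReal

noncomputable def japaneseWeighted {E F : Type*} [Norm E] [SMul ℝ F] (s : ℝ) (f : E → F) (x : E) :
    F :=
  (1 + ‖x‖ ^ 2) ^ (s / 2) • f x

theorem rpow_mul_rpow_neg_le_of_mul_le {s a b c e K : ℝ} (hs : 0 ≤ s) (ha : 0 ≤ a) (hb : 0 < b)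
    (hc : 0 ≤ c) (he : 0 < e) (hK : 0 ≤ K) (h : a * e ≤ K * b * c) :
    a ^ s * b ^ (-s) ≤ K ^ s * e ^ (-s) * c ^ s := by
  have hae : (a * e) ^ s ≤ (K * b * c) ^ s := Real.rpow_le_rpow (by positivity) h hs
  rw [Real.mul_rpow ha he.le, Real.mul_rpow (by positivity) hc, Real.mul_rpow hK hb.le] at hae
  have hb' : b ^ s * b ^ (-s) = 1 := by rw [← Real.rpow_add hb, add_neg_cancel, Real.rpow_zero]
  have he' : e ^ s * e ^ (-s) = 1 := by rw [← Real.rpow_add he, add_neg_cancel, Real.rpow_zero]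
  have := mul_le_mul_of_nonneg_right hae (by positivity : 0 ≤ b ^ (-s) * e ^ (-s))
  calc a ^ s * b ^ (-s) = a ^ s * e ^ s * (b ^ (-s) * e ^ (-s)) := by
        linear_combination (a ^ s * b ^ (-s)) * he'.symm
    _ ≤ K ^ s * b ^ s * c ^ s * (b ^ (-s) * e ^ (-s)) := this
    _ = K ^ s * e ^ (-s) * c ^ s := by linear_combination (K ^ s * e ^ (-s) * c ^ s) * hb'

theorem five_rpow_eq_rpow_half (σ : ℝ) : (5 : ℝ) ^ σ = 25 ^ (σ / 2) := by
  rw [show (25 : ℝ) = 5 ^ 2 by norm_num, ← Real.rpow_natCast_mul (by norm_num)]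
  norm_num
  ring_nf

theorem one_add_sq_le_of_le_add {X Y J : ℝ} (hX : 0 ≤ X) (h : X ≤ Y + 3 / 2 * J) :
    1 + X ^ 2 ≤ 9 / 2 * (1 + J ^ 2) * (1 + Y ^ 2) := by
  nlinarith [sq_nonneg (Y - 3 / 2 * J), sq_nonneg (Y * J)]

theorem one_add_sq_mul_rpow_neg_le {σ X Y J : ℝ} (hσ : 0 ≤ σ) (hX : 0 ≤ X)
    (h : X ≤ Y + 3 / 2 * J) :
    (1 + X ^ 2) ^ (σ / 2) * (1 + J ^ 2) ^ (-σ / 2) ≤ 5 ^ σ * (1 + Y ^ 2) ^ (σ / 2) := by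
  have key := rpow_mul_rpow_neg_le_of_mul_le (a := 1 + X ^ 2) (b := 1 + J ^ 2) (c := 1 + Y ^ 2)
    (e := 1) (K := 25) (s := σ / 2) (by positivity) (by positivity) (by positivity)
    (by positivity) one_pos (by norm_num)
    (by nlinarith [one_add_sq_le_of_le_add hX h, mul_nonneg (sq_nonneg J) (sq_nonneg Y)])
  rwa [Real.one_rpow, mul_one, ← five_rpow_eq_rpow_half, ← neg_div] at key

theorem one_add_sq_mul_rpow_neg_le_of_le {σ X Y J J' : ℝ} (hσ : 0 ≤ σ) (hX : 0 ≤ X)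
    (h : X ≤ Y + 3 / 2 * J) (hJ' : 0 ≤ J') (hY : J' / 2 ≤ Y) :
    (1 + X ^ 2) ^ (σ / 2) * (1 + J ^ 2) ^ (-σ / 2) ≤
      5 ^ σ * (1 + J' ^ 2) ^ (-σ / 2) * (1 + Y ^ 2) ^ (2 * σ / 2) := by
  have hJ'Y : 1 + J' ^ 2 ≤ 4 * (1 + Y ^ 2) := by nlinarith
  have key := rpow_mul_rpow_neg_le_of_mul_le (a := 1 + X ^ 2) (b := 1 + J ^ 2)
    (c := (1 + Y ^ 2) ^ 2) (e := 1 + J' ^ 2) (K := 25) (s := σ / 2)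
    (by positivity) (by positivity) (by positivity) (by positivity) (by positivity) (by norm_num)
    (by nlinarith [mul_le_mul (one_add_sq_le_of_le_add hX h) hJ'Y (by positivity) (by positivity),
      mul_nonneg (sq_nonneg J) (sq_nonneg Y)])
  rwa [← five_rpow_eq_rpow_half, ← Real.rpow_natCast_mul (by positivity), Nat.cast_ofNat,
    ← mul_div_assoc, ← neg_div] at key

section Translation

variable {G F F' : Type*} [MeasurableSpace G] [AddGroup G] [MeasurableAdd G] {μ : Measure G}
  [μ.IsAddRightInvariant] [NormedAddCommGroup F] [NormedAddCommGroup F']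

theorem eLpNorm_comp_sub_right_restrict_preimage {f : G → F} (hf : AEStronglyMeasurable f μ)
    (v : G) (p : ℝ≥0∞) {T : Set G} (hT : MeasurableSet T) :
    eLpNorm (fun x => f (x - v)) p (μ.restrict ((· - v) ⁻¹' T)) = eLpNorm f p (μ.restrict T) :=
  eLpNorm_comp_measurePreserving hf.restrict
    ((measurePreserving_sub_right μ v).restrict_preimage hT)

theorem eLpNorm_smul_comp_sub_right_restrict_preimage [NormedSpace ℝ F] {f : G → F}
    (hf : AEStronglyMeasurable f μ) {C : ℝ} (hC : 0 ≤ C) (v : G) (p : ℝ≥0∞) {T : Set G}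
    (hT : MeasurableSet T) :
    eLpNorm (fun x => C • f (x - v)) p (μ.restrict ((· - v) ⁻¹' T)) =
      ENNReal.ofReal C * eLpNorm f p (μ.restrict T) := by
  rw [← eLpNorm_comp_sub_right_restrict_preimage hf v p hT, ← Real.enorm_of_nonneg hC,
    ← eLpNorm_const_smul]
  rfl

theorem eLpNorm_restrict_le_of_norm_le_comp_sub_right {f : G → F} {g : G → F'}
    (hg : AEStronglyMeasurable g μ) (v : G) {S T : Set G} (hS : MeasurableSet S)
    (hT : MeasurableSet T) (hST : ∀ x ∈ S, x - v ∈ T) {K : ℝ}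
    (hfg : ∀ x ∈ S, ‖f x‖ ≤ K * ‖g (x - v)‖) (p : ℝ≥0∞) :
    eLpNorm f p (μ.restrict S) ≤ ENNReal.ofReal K * eLpNorm g p (μ.restrict T) := by
  calc eLpNorm f p (μ.restrict S)
      ≤ ENNReal.ofReal K * eLpNorm (fun x => g (x - v)) p (μ.restrict S) :=
        eLpNorm_le_mul_eLpNorm_of_ae_le_mul (ae_restrict_of_forall_mem hS hfg) p
    _ ≤ ENNReal.ofReal K * eLpNorm (fun x => g (x - v)) p (μ.restrict ((· - v) ⁻¹' T)) := by
        gcongr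
        exact hST
    _ = ENNReal.ofReal K * eLpNorm g p (μ.restrict T) := by
        rw [eLpNorm_comp_sub_right_restrict_preimage hg v p hT]

end Translation

section Weighted

variable {E F : Type*} [NormedAddCommGroup E] [NormedAddCommGroup F] [NormedSpace ℝ F]

theorem norm_japaneseWeighted (s : ℝ) (f : E → F) (x : E) :
    ‖japaneseWeighted s f x‖ = (1 + ‖x‖ ^ 2) ^ (s / 2) * ‖f x‖ := by
  rw [japaneseWeighted, norm_smul, Real.norm_of_nonneg (Real.rpow_nonneg ?_ _)]
  positivity

theorem continuous_one_add_norm_sq_rpow (s : ℝ) : Continuous fun x : E => (1 + ‖x‖ ^ 2) ^ s :=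
  Continuous.rpow_const (by fun_prop) fun x => Or.inl (by positivity)

theorem MeasureTheory.AEStronglyMeasurable.japaneseWeighted [MeasurableSpace E]
    [OpensMeasurableSpace E] {μ : Measure E} {f : E → F} (hf : AEStronglyMeasurable f μ) (s : ℝ) :
    AEStronglyMeasurable (japaneseWeighted s f) μ :=
  (continuous_one_add_norm_sq_rpow (s / 2)).aestronglyMeasurable.smul hf

variable {σ c J : ℝ} {v : E}

theorem norm_japaneseWeighted_translate_le (hσ : 0 ≤ σ) (hc : 0 ≤ c) (hv : ‖v‖ = 3 / 2 * J)
    (f : E → F) (x : E) :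
    ‖japaneseWeighted σ (fun y => (c * (1 + J ^ 2) ^ (-σ / 2)) • f (y - v)) x‖ ≤
      5 ^ σ * c * ‖japaneseWeighted σ f (x - v)‖ := by
  have hxv : ‖x‖ ≤ ‖x - v‖ + 3 / 2 * J := by linarith [norm_le_norm_add_norm_sub' x v]
  rw [norm_japaneseWeighted, norm_japaneseWeighted, norm_smul, Real.norm_of_nonneg (by positivity)]
  calc (1 + ‖x‖ ^ 2) ^ (σ / 2) * (c * (1 + J ^ 2) ^ (-σ / 2) * ‖f (x - v)‖)
      = (1 + ‖x‖ ^ 2) ^ (σ / 2) * (1 + J ^ 2) ^ (-σ / 2) * (c * ‖f (x - v)‖) := by ring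
    _ ≤ 5 ^ σ * (1 + ‖x - v‖ ^ 2) ^ (σ / 2) * (c * ‖f (x - v)‖) :=
        mul_le_mul_of_nonneg_right (one_add_sq_mul_rpow_neg_le hσ (norm_nonneg x) hxv)
          (by positivity)
    _ = 5 ^ σ * c * ((1 + ‖x - v‖ ^ 2) ^ (σ / 2) * ‖f (x - v)‖) := by ring

theorem norm_japaneseWeighted_translate_le_of_le (hσ : 0 ≤ σ) (hc : 0 ≤ c) (hv : ‖v‖ = 3 / 2 * J)
    {J' : ℝ} (hJ' : 0 ≤ J') (f : E → F) {x : E} (hx : J' / 2 ≤ ‖x - v‖) :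
    ‖japaneseWeighted σ (fun y => (c * (1 + J ^ 2) ^ (-σ / 2)) • f (y - v)) x‖ ≤
      5 ^ σ * c * (1 + J' ^ 2) ^ (-σ / 2) * ‖japaneseWeighted (2 * σ) f (x - v)‖ := by
  have hxv : ‖x‖ ≤ ‖x - v‖ + 3 / 2 * J := by linarith [norm_le_norm_add_norm_sub' x v]
  rw [norm_japaneseWeighted, norm_japaneseWeighted, norm_smul, Real.norm_of_nonneg (by positivity)]
  calc (1 + ‖x‖ ^ 2) ^ (σ / 2) * (c * (1 + J ^ 2) ^ (-σ / 2) * ‖f (x - v)‖)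
      = (1 + ‖x‖ ^ 2) ^ (σ / 2) * (1 + J ^ 2) ^ (-σ / 2) * (c * ‖f (x - v)‖) := by ring
    _ ≤ 5 ^ σ * (1 + J' ^ 2) ^ (-σ / 2) * (1 + ‖x - v‖ ^ 2) ^ (2 * σ / 2) * (c * ‖f (x - v)‖) :=
        mul_le_mul_of_nonneg_right
          (one_add_sq_mul_rpow_neg_le_of_le hσ (norm_nonneg x) hxv hJ' hx) (by positivity)
    _ = 5 ^ σ * c * (1 + J' ^ 2) ^ (-σ / 2) * ((1 + ‖x - v‖ ^ 2) ^ (2 * σ / 2) * ‖f (x - v)‖) := by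
        ring

variable [MeasurableSpace E] [BorelSpace E] {μ : Measure E} [μ.IsAddRightInvariant] {f : E → F}

theorem eLpNorm_japaneseWeighted_translate_le (hσ : 0 ≤ σ) (hc : 0 ≤ c) (hv : ‖v‖ = 3 / 2 * J)
    (hf : AEStronglyMeasurable f μ) (p : ℝ≥0∞) :
    eLpNorm (japaneseWeighted σ (fun y => (c * (1 + J ^ 2) ^ (-σ / 2)) • f (y - v))) p μ ≤
      ENNReal.ofReal (5 ^ σ * c) * eLpNorm (japaneseWeighted σ f) p μ := by
  simpa using eLpNorm_restrict_le_of_norm_le_comp_sub_right (hf.japaneseWeighted σ) v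
    MeasurableSet.univ MeasurableSet.univ (fun _ _ => trivial)
    (fun x _ => norm_japaneseWeighted_translate_le hσ hc hv f x) p

theorem eLpNorm_japaneseWeighted_translate_restrict_le_of_tail_le (hσ : 0 ≤ σ) (hc : 0 ≤ c)
    (hv : ‖v‖ = 3 / 2 * J) {J' δ : ℝ} (hJ' : 0 ≤ J') (hf : AEStronglyMeasurable f μ) {S : Set E}
    (hS : MeasurableSet S) (hSv : ∀ x ∈ S, J' / 2 ≤ ‖x - v‖) {p : ℝ≥0∞}
    (htail : eLpNorm (japaneseWeighted (2 * σ) f) p (μ.restrict {y | J' / 2 ≤ ‖y‖}) ≤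
      ENNReal.ofReal δ) :
    eLpNorm (japaneseWeighted σ (fun y => (c * (1 + J ^ 2) ^ (-σ / 2)) • f (y - v))) p
        (μ.restrict S) ≤ ENNReal.ofReal (5 ^ σ * c * δ * (1 + J' ^ 2) ^ (-σ / 2)) := by
  have hbound := eLpNorm_restrict_le_of_norm_le_comp_sub_right (hf.japaneseWeighted _) v hS
    (measurableSet_le measurable_const measurable_norm) hSv
    (fun x hx => norm_japaneseWeighted_translate_le_of_le hσ hc hv hJ' f (hSv x hx)) p
  refine (hbound.trans (mul_le_mul_right htail _)).trans_eq ?_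
  rw [← ENNReal.ofReal_mul (by positivity)]
  ring_nf

end Weighted

section Annulus

variable {E : Type*} [SeminormedAddCommGroup E] {v x : E} {J : ℝ}

theorem mem_annulus_of_norm_sub_lt_one (hv : ‖v‖ = 3 / 2 * J) (hJ : 2 ≤ J) (hx : ‖x - v‖ < 1) :
    J ≤ ‖x‖ ∧ ‖x‖ ≤ 2 * J := by
  have := norm_le_norm_add_norm_sub' x v
  have := norm_le_norm_add_norm_sub x v
  constructor <;> linarith

theorem half_le_norm_sub_of_not_mem_annulus (hv : ‖v‖ = 3 / 2 * J) (hx : ¬(J ≤ ‖x‖ ∧ ‖x‖ ≤ 2 * J)) :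
    J / 2 ≤ ‖x - v‖ := by
  have := norm_le_norm_add_norm_sub' x v
  have := norm_le_norm_add_norm_sub x v
  rw [not_and_or, not_le, not_le] at hx
  rcases hx with hx | hx <;> linarith

theorem half_le_norm_sub_of_three_mul_le {J' : ℝ} (hv : ‖v‖ = 3 / 2 * J) (hJ : 3 * J ≤ J')
    (hx : J' ≤ ‖x‖) : J' / 2 ≤ ‖x - v‖ := by
  have := norm_le_norm_add_norm_sub' x v
  linarith

end Annulus

theorem le_of_three_mul_le_succ {j : ℕ → ℕ} (hj : ∀ n, 1 ≤ n → 3 * j n ≤ j (n + 1)) {m n : ℕ}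
    (hm : 1 ≤ m) (hmn : m ≤ n) : j m ≤ j n :=
  monotoneOn_nat_Ici_of_le_succ (fun k hk => (Nat.le_mul_of_pos_left _ three_pos).trans (hj k hk))
    hm (hm.trans hmn) hmn

theorem three_mul_le_of_lt {j : ℕ → ℕ} (hj : ∀ n, 1 ≤ n → 3 * j n ≤ j (n + 1)) {l n : ℕ}
    (hl : 1 ≤ l) (hln : l < n) : 3 * j l ≤ j n :=
  (hj l hl).trans (le_of_three_mul_le_succ hj (by omega) hln)

theorem bump_sequence_estimates_general
    (d : ℕ) (hd : 0 < d) (σ : ℝ) (hσ : 0 ≤ σ) (p q : ℝ≥0∞)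
    (h : EuclideanSpace ℝ (Fin d) → ℂ) (hmeas : Measurable h)
    (hmassq : 1 ≤ eLpNorm h q (volume.restrict (Metric.ball (0 : EuclideanSpace ℝ (Fin d)) 1)))
    (j : ℕ → ℕ) (hj1 : 2 ≤ j 1) (hjgrow : ∀ n, 1 ≤ n → 3 * j n ≤ j (n + 1))
    (hjtail : ∀ n, 1 ≤ n →
      eLpNorm (fun x => ((1 + ‖x‖ ^ 2) ^ ((2 * σ) / 2) : ℝ) • h x) p
          (volume.restrict {x : EuclideanSpace ℝ (Fin d) | (j n : ℝ) / 2 ≤ ‖x‖}) ≤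
        ENNReal.ofReal ((2 : ℝ) ^ (-(3 * (n : ℝ)))))
    (A : ℕ → Set (EuclideanSpace ℝ (Fin d)))
    (hA : ∀ n, A n = {x : EuclideanSpace ℝ (Fin d) | (j n : ℝ) ≤ ‖x‖ ∧ ‖x‖ ≤ 2 * (j n : ℝ)})
    (ε : ℕ → EuclideanSpace ℝ (Fin d) → ℂ)
    (hε : ∀ n x, ε n x =
      (((2 : ℝ) ^ (-(n : ℝ)) * (1 + (j n : ℝ) ^ 2) ^ (-σ / 2) : ℝ) : ℂ) *
        h (x - (3 / 2 * (j n : ℝ)) • EuclideanSpace.single (⟨0, hd⟩ : Fin d) (1 : ℝ))) :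
    ∀ n, 1 ≤ n →
      -- (1) global upper bounds
      (eLpNorm (fun x => ((1 + ‖x‖ ^ 2) ^ (σ / 2) : ℝ) • ε n x) p volume ≤
          ENNReal.ofReal ((5 : ℝ) ^ σ * (2 : ℝ) ^ (-(n : ℝ))) *
            eLpNorm (fun x => ((1 + ‖x‖ ^ 2) ^ (σ / 2) : ℝ) • h x) p volume) ∧
      (eLpNorm (ε n) q volume =
          ENNReal.ofReal ((2 : ℝ) ^ (-(n : ℝ)) * (1 + (j n : ℝ) ^ 2) ^ (-σ / 2)) *
            eLpNorm h q volume) ∧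
      -- (2) mass concentration on `A n`
      (ENNReal.ofReal ((2 : ℝ) ^ (-(n : ℝ)) * (1 + (j n : ℝ) ^ 2) ^ (-σ / 2)) ≤
          eLpNorm (ε n) q (volume.restrict (A n))) ∧
      -- (3) tail bound outside of `A n`
      (eLpNorm (fun x => ((1 + ‖x‖ ^ 2) ^ (σ / 2) : ℝ) • ε n x) p (volume.restrict (A n)ᶜ) ≤
          ENNReal.ofReal ((5 : ℝ) ^ σ * (2 : ℝ) ^ (-(4 * (n : ℝ))) *
            (1 + (j n : ℝ) ^ 2) ^ (-σ / 2))) ∧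
      -- (4) small overlap bound
      (∀ l, 1 ≤ l → l < n →
        eLpNorm (fun x => ((1 + ‖x‖ ^ 2) ^ (σ / 2) : ℝ) • ε l x) p (volume.restrict (A n)) ≤
          ENNReal.ofReal ((5 : ℝ) ^ σ * (2 : ℝ) ^ (-(3 * (n : ℝ))) *
            (1 + (j n : ℝ) ^ 2) ^ (-σ / 2))) := by
  intro n hn
  set v : ℕ → EuclideanSpace ℝ (Fin d) :=
    fun m => (3 / 2 * (j m : ℝ)) • EuclideanSpace.single (⟨0, hd⟩ : Fin d) (1 : ℝ)
  have hv : ∀ m, ‖v m‖ = 3 / 2 * j m := fun m => by simp [v, norm_smul, PiLp.norm_single]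
  have hεv : ∀ m, ε m =
      fun x => ((2 : ℝ) ^ (-(m : ℝ)) * (1 + (j m : ℝ) ^ 2) ^ (-σ / 2)) • h (x - v m) :=
    fun m => funext fun x => by rw [hε, Complex.real_smul]
  have hh : AEStronglyMeasurable h volume := hmeas.aestronglyMeasurable
  have hA_meas : MeasurableSet (A n) := hA n ▸
    (measurableSet_le measurable_const measurable_norm).inter
      (measurableSet_le measurable_norm measurable_const)
  have hε_preimage : ∀ T, MeasurableSet T → eLpNorm (ε n) q (volume.restrict ((· - v n) ⁻¹' T)) =
      ENNReal.ofReal ((2 : ℝ) ^ (-(n : ℝ)) * (1 + (j n : ℝ) ^ 2) ^ (-σ / 2)) *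
        eLpNorm h q (volume.restrict T) := fun T hT => by
    rw [hεv]; exact eLpNorm_smul_comp_sub_right_restrict_preimage hh (by positivity) _ q hT
  have hε_far : ∀ m S, MeasurableSet S → (∀ x ∈ S, (j n : ℝ) / 2 ≤ ‖x - v m‖) →
      eLpNorm (japaneseWeighted σ (ε m)) p (volume.restrict S) ≤ ENNReal.ofReal ((5 : ℝ) ^ σ *
        (2 : ℝ) ^ (-(m : ℝ)) * (2 : ℝ) ^ (-(3 * (n : ℝ))) * (1 + (j n : ℝ) ^ 2) ^ (-σ / 2)) :=
    fun m S hS hSv => by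
      rw [hεv]
      exact eLpNorm_japaneseWeighted_translate_restrict_le_of_tail_le hσ (by positivity) (hv m)
        (by positivity) hh hS hSv (hjtail n hn)
  refine ⟨?_, ?_, ?_, ?_, ?_⟩
  · rw [hεv]
    exact eLpNorm_japaneseWeighted_translate_le hσ (by positivity) (hv n) hh p
  · simpa using hε_preimage Set.univ MeasurableSet.univ
  · have hjn : (2 : ℝ) ≤ j n := by
      exact_mod_cast hj1.trans (le_of_three_mul_le_succ hjgrow le_rfl hn)
    calc _ ≤ _ * eLpNorm h q (volume.restrict (Metric.ball 0 1)) := le_mul_of_one_le_right' hmassq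
      _ = _ := (hε_preimage _ Metric.isOpen_ball.measurableSet).symm
      _ ≤ _ := eLpNorm_mono_measure _ <| Measure.restrict_mono (fun x hx => hA n ▸
          mem_annulus_of_norm_sub_lt_one (hv n) hjn (by simpa using hx)) le_rfl
  · refine (hε_far n _ hA_meas.compl fun x hx =>
      half_le_norm_sub_of_not_mem_annulus (hv n) (by simpa [hA n] using hx)).trans_eq ?_
    rw [mul_assoc ((5 : ℝ) ^ σ) (2 ^ _), ← Real.rpow_add two_pos]
    ring_nf
  · intro l hl hln
    have hjln : 3 * (j l : ℝ) ≤ j n := by exact_mod_cast three_mul_le_of_lt hjgrow hl hln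
    have h2l : (2 : ℝ) ^ (-(l : ℝ)) ≤ 1 :=
      Real.rpow_le_one_of_one_le_of_nonpos one_le_two (by simp)
    calc _ ≤ _ := hε_far l _ hA_meas fun x hx =>
          half_le_norm_sub_of_three_mul_le (hv l) hjln (hA n ▸ hx).1
      _ ≤ ENNReal.ofReal ((5 : ℝ) ^ σ * 1 * _ * _) := by gcongr
      _ = _ := by rw [mul_one]

/-- **Bump estimates (Lemma on the sequence `ε_n`).**
Given `h` with unit mass on the unit ball, weighted decay, and a rapidly growing
sequence of radii `j_n`, the translated bumps
`ε_n(x) = 2^{-n} ⟨j_n⟩^{-σ} h(x − (3/2) j_n e₁)` satisfy global upper bounds,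
a mass concentration bound on the annulus `A_n = {j_n ≤ |x| ≤ 2 j_n}`, a tail
bound outside `A_n`, and a small-overlap bound. -/
theorem bump_sequence_estimates
    (d : ℕ) (hd : 0 < d) (σ : ℝ) (hσ : 0 ≤ σ) (p q : ℝ≥0∞)
    (hp : 1 ≤ p) (hp' : p ≠ ∞) (hq : 1 ≤ q)
    (h : EuclideanSpace ℝ (Fin d) → ℂ) (hmeas : Measurable h)
    (hdecay : eLpNorm (fun x => ((1 + ‖x‖ ^ 2) ^ ((2 * σ) / 2) : ℝ) • h x) p volume ≠ ∞)
    (hmassq : 1 ≤ eLpNorm h q (volume.restrict (Metric.ball (0 : EuclideanSpace ℝ (Fin d)) 1)))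
    (hmassp : 1 ≤ eLpNorm h p (volume.restrict (Metric.ball (0 : EuclideanSpace ℝ (Fin d)) 1)))
    (j : ℕ → ℕ) (hj1 : 2 ≤ j 1) (hjgrow : ∀ n, 1 ≤ n → 3 * j n ≤ j (n + 1))
    (hjtail : ∀ n, 1 ≤ n →
      eLpNorm (fun x => ((1 + ‖x‖ ^ 2) ^ ((2 * σ) / 2) : ℝ) • h x) p
          (volume.restrict {x : EuclideanSpace ℝ (Fin d) | (j n : ℝ) / 2 ≤ ‖x‖}) ≤
        ENNReal.ofReal ((2 : ℝ) ^ (-(3 * (n : ℝ)))))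
    (A : ℕ → Set (EuclideanSpace ℝ (Fin d)))
    (hA : ∀ n, A n = {x : EuclideanSpace ℝ (Fin d) | (j n : ℝ) ≤ ‖x‖ ∧ ‖x‖ ≤ 2 * (j n : ℝ)})
    (ε : ℕ → EuclideanSpace ℝ (Fin d) → ℂ)
    (hε : ∀ n x, ε n x =
      (((2 : ℝ) ^ (-(n : ℝ)) * (1 + (j n : ℝ) ^ 2) ^ (-σ / 2) : ℝ) : ℂ) *
        h (x - (3 / 2 * (j n : ℝ)) • EuclideanSpace.single (⟨0, hd⟩ : Fin d) (1 : ℝ))) :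
    ∀ n, 1 ≤ n →
      -- (1) global upper bounds
      (eLpNorm (fun x => ((1 + ‖x‖ ^ 2) ^ (σ / 2) : ℝ) • ε n x) p volume ≤
          ENNReal.ofReal ((5 : ℝ) ^ σ * (2 : ℝ) ^ (-(n : ℝ))) *
            eLpNorm (fun x => ((1 + ‖x‖ ^ 2) ^ (σ / 2) : ℝ) • h x) p volume) ∧
      (eLpNorm (ε n) q volume =
          ENNReal.ofReal ((2 : ℝ) ^ (-(n : ℝ)) * (1 + (j n : ℝ) ^ 2) ^ (-σ / 2)) *
            eLpNorm h q volume) ∧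
      -- (2) mass concentration on `A n`
      (ENNReal.ofReal ((2 : ℝ) ^ (-(n : ℝ)) * (1 + (j n : ℝ) ^ 2) ^ (-σ / 2)) ≤
          eLpNorm (ε n) q (volume.restrict (A n))) ∧
      -- (3) tail bound outside of `A n`
      (eLpNorm (fun x => ((1 + ‖x‖ ^ 2) ^ (σ / 2) : ℝ) • ε n x) p (volume.restrict (A n)ᶜ) ≤
          ENNReal.ofReal ((5 : ℝ) ^ σ * (2 : ℝ) ^ (-(4 * (n : ℝ))) *
            (1 + (j n : ℝ) ^ 2) ^ (-σ / 2))) ∧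
      -- (4) small overlap bound
      (∀ l, 1 ≤ l → l < n →
        eLpNorm (fun x => ((1 + ‖x‖ ^ 2) ^ (σ / 2) : ℝ) • ε l x) p (volume.restrict (A n)) ≤
          ENNReal.ofReal ((5 : ℝ) ^ σ * (2 : ℝ) ^ (-(3 * (n : ℝ))) *
            (1 + (j n : ℝ) ^ 2) ^ (-σ / 2))) :=
  bump_sequence_estimates_general d hd σ hσ p q h hmeas hmassq j hj1 hjgrow hjtail A hA ε hε
end

section
/- Let (S, μ) be a measure space, p ∈ [1, ∞], and F₁, F₂ ∈ L^p(μ; ℂ). Then for every λ₀ ∈ ℂ there exists λ ∈ ℂ with |λ| = 1 such that ‖F₂ − λ F₁‖_{L^p(μ)} ≤ 2 ‖F₂ − λ₀ F₁‖_{L^p(μ)} + ‖ |F₁| − |F₂| ‖_{L^p(μ)}. In particular, inf_{|λ| = 1} ‖F₂ − λ F₁‖_{L^p(μ)} ≤ 2 · inf_{λ ∈ ℂ} ‖F₂ − λ F₁‖_{L^p(μ)} + ‖ |F₁| − |F₂| ‖_{L^p(μ)}. -/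
open MeasureTheory ENNReal

/-! Write `λ₀ = |λ₀| λ` with `|λ| = 1`. Then `F₂ − λF₁ = (F₂ − λ₀F₁) + (λ₀ − λ)F₁`, and pointwise
`|(λ₀ − λ)F₁| = ||λ₀F₁| − |F₁|| ≤ |λ₀F₁ − F₂| + ||F₂| − |F₁||`; Minkowski's inequality, applied
twice, finishes. -/

theorem Complex.exists_norm_eq_one_norm_sub_eq (z : ℂ) :
    ∃ u : ℂ, ‖u‖ = 1 ∧ ‖z - u‖ = |‖z‖ - 1| := by
  refine ⟨exp (arg z * I), norm_exp_ofReal_mul_I _, ?_⟩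
  have hz : z - exp (arg z * I) = ((‖z‖ - 1 : ℝ) : ℂ) * exp (arg z * I) := by
    rw [ofReal_sub, ofReal_one, sub_one_mul, norm_mul_exp_arg_mul_I]
  rw [hz, norm_mul, norm_exp_ofReal_mul_I, mul_one, norm_real, Real.norm_eq_abs]

section NormedField

variable {𝕜 : Type*} [NormedField 𝕜]

theorem norm_sub_mul_le_of_norm_sub_eq {z u : 𝕜} (hzu : ‖z - u‖ = |‖z‖ - 1|) (a b : 𝕜) :
    ‖(z - u) * a‖ ≤ ‖b - z * a‖ + |‖a‖ - ‖b‖| := calc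
  ‖(z - u) * a‖ = |‖z * a‖ - ‖a‖| := by
    rw [norm_mul, norm_mul, hzu, ← abs_norm a, ← abs_mul, sub_mul, one_mul, abs_norm]
  _ ≤ |‖z * a‖ - ‖b‖| + |‖b‖ - ‖a‖| := abs_sub_le _ _ _
  _ ≤ ‖b - z * a‖ + |‖a‖ - ‖b‖| := by
    rw [abs_sub_comm ‖b‖, abs_sub_comm ‖z * a‖]
    exact add_le_add_left (abs_norm_sub_norm_le _ _) _

variable {S : Type*} [MeasurableSpace S] {μ : Measure S} {p : ℝ≥0∞} {F₁ F₂ : S → 𝕜}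

theorem eLpNorm_sub_mul_le_of_norm_sub_eq (hp : 1 ≤ p) (h₁ : AEStronglyMeasurable F₁ μ)
    (h₂ : AEStronglyMeasurable F₂ μ) {z u : 𝕜} (hzu : ‖z - u‖ = |‖z‖ - 1|) :
    eLpNorm (fun x => F₂ x - u * F₁ x) p μ ≤
      2 * eLpNorm (fun x => F₂ x - z * F₁ x) p μ + eLpNorm (fun x => ‖F₁ x‖ - ‖F₂ x‖) p μ := by
  set A := eLpNorm (fun x => F₂ x - z * F₁ x) p μ
  set B := eLpNorm (fun x => ‖F₁ x‖ - ‖F₂ x‖) p μ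
  have hA : AEStronglyMeasurable (fun x => F₂ x - z * F₁ x) μ := h₂.sub (h₁.const_mul z)
  have hB : AEStronglyMeasurable (fun x => ‖F₁ x‖ - ‖F₂ x‖) μ := h₁.norm.sub h₂.norm
  have hcorr : eLpNorm (fun x => (z - u) * F₁ x) p μ ≤ A + B := calc
    eLpNorm (fun x => (z - u) * F₁ x) p μ
        ≤ eLpNorm (fun x => ‖F₂ x - z * F₁ x‖ + |‖F₁ x‖ - ‖F₂ x‖|) p μ :=
      eLpNorm_mono_real fun x => norm_sub_mul_le_of_norm_sub_eq hzu (F₁ x) (F₂ x)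
    _ ≤ eLpNorm (fun x => ‖F₂ x - z * F₁ x‖) p μ + eLpNorm (fun x => |‖F₁ x‖ - ‖F₂ x‖|) p μ :=
      eLpNorm_add_le hA.norm hB.norm hp
    _ = A + B := by simp only [← Real.norm_eq_abs, eLpNorm_norm, A, B]
  calc eLpNorm (fun x => F₂ x - u * F₁ x) p μ
      = eLpNorm (fun x => (F₂ x - z * F₁ x) + (z - u) * F₁ x) p μ := by congr 1; funext x; ring
    _ ≤ A + eLpNorm (fun x => (z - u) * F₁ x) p μ := eLpNorm_add_le hA (h₁.const_mul _) hp
    _ ≤ 2 * A + B := by rw [two_mul, add_assoc]; gcongr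

end NormedField

/-- **Reduction from arbitrary to unimodular phase factors.**
For `F₁, F₂ ∈ L^p(μ; ℂ)` and any `λ₀ ∈ ℂ` there is a unimodular `λ` with
`‖F₂ − λF₁‖_p ≤ 2‖F₂ − λ₀F₁‖_p + ‖|F₁| − |F₂|‖_p`; in particular
`inf_{|λ|=1} ‖F₂ − λF₁‖_p ≤ 2 inf_{λ∈ℂ} ‖F₂ − λF₁‖_p + ‖|F₁| − |F₂|‖_p`. -/
theorem unimodular_phase_reduction
    {S : Type*} [MeasurableSpace S] (μ : Measure S) (p : ℝ≥0∞) (hp : 1 ≤ p)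
    (F₁ F₂ : S → ℂ) (h1 : MemLp F₁ p μ) (h2 : MemLp F₂ p μ) :
    (∀ l₀ : ℂ, ∃ l : ℂ, ‖l‖ = 1 ∧
      eLpNorm (fun x => F₂ x - l * F₁ x) p μ ≤
        2 * eLpNorm (fun x => F₂ x - l₀ * F₁ x) p μ +
          eLpNorm (fun x => ‖F₁ x‖ - ‖F₂ x‖) p μ) ∧
    (⨅ (l : ℂ) (_ : ‖l‖ = 1), eLpNorm (fun x => F₂ x - l * F₁ x) p μ) ≤
      2 * (⨅ l₀ : ℂ, eLpNorm (fun x => F₂ x - l₀ * F₁ x) p μ) +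
        eLpNorm (fun x => ‖F₁ x‖ - ‖F₂ x‖) p μ := by
  have key : ∀ l₀ : ℂ, ∃ l : ℂ, ‖l‖ = 1 ∧
      eLpNorm (fun x => F₂ x - l * F₁ x) p μ ≤
        2 * eLpNorm (fun x => F₂ x - l₀ * F₁ x) p μ +
          eLpNorm (fun x => ‖F₁ x‖ - ‖F₂ x‖) p μ := fun l₀ => by
    obtain ⟨l, hl, hdist⟩ := Complex.exists_norm_eq_one_norm_sub_eq l₀
    exact ⟨l, hl, eLpNorm_sub_mul_le_of_norm_sub_eq hp h1.1 h2.1 hdist⟩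
  refine ⟨key, ?_⟩
  rw [ENNReal.mul_iInf_of_ne two_ne_zero ofNat_ne_top, ENNReal.iInf_add]
  refine le_iInf fun l₀ => ?_
  obtain ⟨l, hl, hle⟩ := key l₀
  exact (iInf₂_le l hl).trans hle
end

section
/- Let F₁, F₂ : ℂ → ℂ be complex-differentiable at a point z₀ ∈ ℂ with F₁(z₀) ≠ 0 and F₂(z₀) ≠ 0. Then |F₂′(z₀) − F₂(z₀) F₁′(z₀)/F₁(z₀)| ≤ ‖D|F₂|(z₀) − D|F₁|(z₀)‖ + (‖D|F₁|(z₀)‖ / |F₁(z₀)|) · | |F₁(z₀)| − |F₂(z₀)| |, where the left-hand side equals |F₁(z₀)| · |(F₂/F₁)′(z₀)|. -/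
/-!
At a point where `F ≠ 0`, the real differential of `|F|` is `h ↦ ⟪v, h⟫` with
`v = |F| · conj (F'/F)`, so `‖D|F|‖ = |F'|` and `D|F₂| - D|F₁|` is represented by
`v₂ - v₁`. Writing `a = F₁ z₀`, `b = F₂ z₀`, the left-hand side is
`|b| · |F₂'/F₂ - F₁'/F₁| = |v₂ - (|b|/|a|) v₁|`, and the triangle inequality through `v₁`
gives the bound.
-/

open ComplexConjugate

theorem HasFDerivAt.norm {G F : Type*} [NormedAddCommGroup G] [NormedSpace ℝ G]
    [NormedAddCommGroup F] [InnerProductSpace ℝ F] {f : G → F} {f' : G →L[ℝ] F} {x : G}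
    (hf : HasFDerivAt f f' x) (h0 : f x ≠ 0) :
    HasFDerivAt (‖f ·‖) ((‖f x‖⁻¹ • innerSL ℝ (f x)).comp f') x := by
  have hsqrt := hf.norm_sq.sqrt (pow_ne_zero 2 (norm_ne_zero_iff.2 h0))
  simp only [Real.sqrt_sq (norm_nonneg _)] at hsqrt
  convert hsqrt using 1
  ext y
  simp only [ContinuousLinearMap.smul_comp, smul_apply, ContinuousLinearMap.comp_apply,
    coe_innerSL_apply, smul_eq_mul, one_div, mul_inv_rev, nsmul_eq_mul, Nat.cast_ofNat]
  field_simp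

theorem HasDerivAt.hasFDerivAt_norm {F : ℂ → ℂ} {F' z : ℂ} (hF : HasDerivAt F F' z)
    (h0 : F z ≠ 0) :
    HasFDerivAt (‖F ·‖) (innerSL ℝ ((‖F z‖ : ℂ) * conj (F' / F z))) z := by
  have hconj : conj (F z) = ‖F z‖ ^ 2 / F z := by
    rw [eq_div_iff h0, mul_comm, Complex.mul_conj, Complex.normSq_eq_norm_sq]
    push_cast
    ring
  refine (hF.complexToReal_fderiv.norm h0).congr_fderiv ?_
  ext h
  simp only [ContinuousLinearMap.smul_comp, smul_apply, ContinuousLinearMap.comp_apply,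
    one_apply_eq_self, smul_eq_mul, coe_innerSL_apply, Complex.inner, map_div₀, map_mul,
    Complex.conj_ofReal, Complex.conj_conj]
  rw [hconj, ← Complex.re_ofReal_mul]
  congr 1
  push_cast
  field_simp

theorem norm_sub_div_smul_le {E : Type*} [SeminormedAddCommGroup E] [NormedSpace ℝ E]
    (x y : E) {r : ℝ} (hr : 0 < r) (s : ℝ) :
    ‖y - (s / r) • x‖ ≤ ‖y - x‖ + ‖x‖ / r * |r - s| := by
  have hsplit : y - (s / r) • x = (y - x) + ((r - s) / r) • x := by
    rw [sub_div, div_self hr.ne', sub_smul, one_smul]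
    abel
  rw [hsplit]
  refine (norm_add_le _ _).trans_eq ?_
  rw [norm_smul, Real.norm_eq_abs, abs_div, abs_of_pos hr]
  ring

theorem norm_sub_mul_div_eq_norm_sub_smul {a b a' b' : ℂ} (ha : a ≠ 0) (hb : b ≠ 0) :
    ‖b' - b * a' / a‖ =
      ‖(‖b‖ : ℂ) * conj (b' / b) - (‖b‖ / ‖a‖) • ((‖a‖ : ℂ) * conj (a' / a))‖ := by
  have hna : (‖a‖ : ℂ) ≠ 0 := by simpa using ha
  have hlhs : b' - b * a' / a = b * (b' / b - a' / a) := by field_simp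
  have hrhs : (‖b‖ : ℂ) * conj (b' / b) - (‖b‖ / ‖a‖) • ((‖a‖ : ℂ) * conj (a' / a)) =
      ‖b‖ * conj (b' / b - a' / a) := by
    rw [Complex.real_smul, map_sub]
    push_cast
    field_simp
  rw [hlhs, hrhs, norm_mul, norm_mul, Complex.norm_conj, Complex.norm_real,
    Real.norm_of_nonneg (norm_nonneg _)]

/-- **Pointwise derivative comparison for moduli of holomorphic functions.**
If `F₁, F₂` are complex-differentiable at `z₀` with `F₁(z₀), F₂(z₀) ≠ 0`, then
`|F₂′(z₀) − F₂(z₀)F₁′(z₀)/F₁(z₀)| ≤ ‖D|F₂|(z₀) − D|F₁|(z₀)‖ +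
(‖D|F₁|(z₀)‖/|F₁(z₀)|)·||F₁(z₀)| − |F₂(z₀)||`, where the left-hand side equals
`|F₁(z₀)|·|(F₂/F₁)′(z₀)|`. -/
theorem deriv_quotient_bound_by_moduli
    (F₁ F₂ : ℂ → ℂ) (z₀ : ℂ)
    (h1 : DifferentiableAt ℂ F₁ z₀) (h2 : DifferentiableAt ℂ F₂ z₀)
    (h10 : F₁ z₀ ≠ 0) (h20 : F₂ z₀ ≠ 0) :
    ‖deriv F₂ z₀ - F₂ z₀ * deriv F₁ z₀ / F₁ z₀‖ =
      ‖F₁ z₀‖ * ‖deriv (fun z => F₂ z / F₁ z) z₀‖ ∧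
    ‖deriv F₂ z₀ - F₂ z₀ * deriv F₁ z₀ / F₁ z₀‖ ≤
      ‖fderiv ℝ (fun z => ‖F₂ z‖) z₀ -
          fderiv ℝ (fun z => ‖F₁ z‖) z₀‖ +
        (‖fderiv ℝ (fun z => ‖F₁ z‖) z₀‖ / ‖F₁ z₀‖) *
          |‖F₁ z₀‖ - ‖F₂ z₀‖| := by
  refine ⟨?_, ?_⟩
  · rw [deriv_fun_div h2 h1 h10, ← norm_mul]
    congr 1
    field_simp
  · rw [(h1.hasDerivAt.hasFDerivAt_norm h10).fderiv, (h2.hasDerivAt.hasFDerivAt_norm h20).fderiv,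
      ← map_sub, innerSL_apply_norm, innerSL_apply_norm, norm_sub_mul_div_eq_norm_sub_smul h10 h20]
    exact norm_sub_div_smul_le _ _ (norm_pos_iff.2 h10) _
end

section
/- Let z₀ ∈ ℂ, ε > 0, p ∈ [1, ∞), and let H be holomorphic on the open ball B(z₀, ε) ⊆ ℂ. Then ∫_{B(z₀, ε/2)} |H(z)|^p dA(z) ≤ 4 · ∫_{B(z₀, ε) ∖ B(z₀, ε/2)} |H(z)|^p dA(z), where dA denotes two-dimensional Lebesgue measure (an inequality in [0, ∞]). -/
open MeasureTheory ENNReal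
open Set Metric Real
open scoped Interval

/-!
`|H|^p` is subharmonic: the mean value property and Jensen's inequality give
`|H(z)|^p ≤ ⨍_{B(z,R)} |H|^p` whenever `B(z,R) ⊆ B(z₀,ε)`. Integrating this over an annulus `A`
whose points lie at distance at least `R` from the boundary and swapping the integrals gives
`πR² ∫_A |H|^p ≤ |A| ∫_{B(z₀,ε)} |H|^p`. Cutting `B(z₀,ε/2)` at the radii `ε/6` and `ε/3` yields
`∫_{B(z₀,ε/2)} |H|^p ≤ (1/25 + 3/16 + 5/9) ∫_{B(z₀,ε)} |H|^p`, and as `5 (1/25 + 3/16 + 5/9) ≤ 4`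
and the left side is finite, this rearranges to the claim.
-/

section CircleAverage

variable {E : Type*} [NormedAddCommGroup E] [NormedSpace ℝ E]

theorem norm_circleAverage_le (f : ℂ → E) (c : ℂ) (R : ℝ) :
    ‖circleAverage f c R‖ ≤ circleAverage (fun z ↦ ‖f z‖) c R := by
  rw [circleAverage_def, circleAverage_def, norm_smul, smul_eq_mul, norm_inv,
    Real.norm_of_nonneg two_pi_pos.le]
  gcongr
  exact intervalIntegral.norm_integral_le_integral_norm two_pi_pos.le

theorem ConvexOn.map_circleAverage_le [CompleteSpace E] {s : Set E} {g : E → ℝ} {f : ℂ → E}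
    {c : ℂ} {R : ℝ} (hg : ConvexOn ℝ s g) (hgc : ContinuousOn g s) (hsc : IsClosed s)
    (hfs : ∀ θ, f (circleMap c R θ) ∈ s) (hfi : CircleIntegrable f c R)
    (hgi : CircleIntegrable (g ∘ f) c R) :
    g (circleAverage f c R) ≤ circleAverage (g ∘ f) c R := by
  have hvol : volume (Ι (0 : ℝ) (2 * π)) = ENNReal.ofReal (2 * π) := by
    rw [uIoc_of_le two_pi_pos.le, Real.volume_Ioc, sub_zero]
  simp only [circleAverage_eq_intervalAverage]
  exact hg.map_set_average_le hgc hsc (hvol ▸ (ofReal_pos.2 two_pi_pos).ne')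
    (hvol ▸ ofReal_ne_top) (Filter.Eventually.of_forall hfs) (intervalIntegrable_iff.mp hfi)
    (intervalIntegrable_iff.mp hgi)

end CircleAverage

theorem norm_rpow_le_circleAverage {H : ℂ → ℂ} {c : ℂ} {R p : ℝ} (hR : 0 < R)
    (hH : DiffContOnCl ℂ H (ball c R)) (hp : 1 ≤ p) :
    ‖H c‖ ^ p ≤ circleAverage (fun z ↦ ‖H z‖ ^ p) c R := by
  have hcont : ContinuousOn (fun z ↦ ‖H z‖) (sphere c R) :=
    hH.continuousOn.norm.mono (closure_ball c hR.ne' ▸ sphere_subset_closedBall)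
  have hmean : circleAverage H c R = H c := by
    rw [← abs_of_pos hR] at hH
    exact hH.circleAverage
  calc ‖H c‖ ^ p ≤ (circleAverage (fun z ↦ ‖H z‖) c R) ^ p := by
        gcongr
        exact hmean ▸ norm_circleAverage_le H c R
    _ ≤ circleAverage (fun z ↦ ‖H z‖ ^ p) c R :=
        (convexOn_rpow hp).map_circleAverage_le (f := fun z ↦ ‖H z‖)
          (continuousOn_id.rpow_const fun _ _ ↦ Or.inr (by linarith)) isClosed_Ici
          (fun θ ↦ norm_nonneg _) (hcont.circleIntegrable hR.le)
          ((hcont.rpow_const fun _ _ ↦ Or.inr (by linarith)).circleIntegrable hR.le)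

theorem Complex.volume_ball_eq_ofReal (a : ℂ) {r : ℝ} (hr : 0 ≤ r) :
    volume (ball a r) = ENNReal.ofReal (π * r ^ 2) := by
  rw [Complex.volume_ball, ← ENNReal.ofReal_pow hr, ← ofReal_coe_nnreal, NNReal.coe_real_pi,
    ← ENNReal.ofReal_mul (by positivity), mul_comm]

theorem integral_Ioo_circleMap (f : ℂ → ℝ) (c : ℂ) (R : ℝ) :
    ∫ θ in Ioo (-π) π, f (circleMap c R θ) = 2 * π * circleAverage f c R := by
  rw [circleAverage_eq_integral_add (-π),
    intervalIntegral.integral_comp_add_right (fun θ ↦ f (circleMap c R θ)), smul_eq_mul,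
    ← mul_assoc, mul_inv_cancel₀ two_pi_pos.ne', one_mul,
    intervalIntegral.integral_of_le (by linarith [pi_pos]), integral_Ioc_eq_integral_Ioo]
  ring_nf

theorem setLIntegral_ofReal_Ioo_zero {R : ℝ} (hR : 0 ≤ R) :
    ∫⁻ s in Ioo 0 R, ENNReal.ofReal s = ENNReal.ofReal (R ^ 2 / 2) := by
  rw [← ofReal_integral_eq_lintegral_ofReal, ← integral_Ioc_eq_integral_Ioo,
    ← intervalIntegral.integral_of_le hR, integral_id]
  · ring_nf
  · exact continuous_id.integrableOn_Icc.mono_set Ioo_subset_Icc_self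
  · exact (ae_restrict_mem measurableSet_Ioo).mono fun s hs ↦ hs.1.le

theorem lintegral_circle_le_setLIntegral_ball {g : ℂ → ℝ≥0∞} {c : ℂ} {R : ℝ}
    (hg : ContinuousOn g (ball c R)) :
    ∫⁻ s in Ioo 0 R, ENNReal.ofReal s * ∫⁻ θ in Ioo (-π) π, g (circleMap c s θ) ≤
      ∫⁻ w in ball c R, g w := by
  set S : Set (ℝ × ℝ) := Ioo 0 R ×ˢ Ioo (-π) π
  have hS : MeasurableSet S := measurableSet_Ioo.prod measurableSet_Ioo
  have hmaps : MapsTo (fun q : ℝ × ℝ ↦ circleMap c q.1 q.2) S (ball c R) := by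
    rintro ⟨s, θ⟩ ⟨hs, -⟩
    simp [circleMap, abs_of_pos hs.1, hs.2]
  have hpolar : ∀ q : ℝ × ℝ, c + Complex.polarCoord.symm q = circleMap c q.1 q.2 := by
    intro q
    simp [circleMap, Complex.exp_mul_I, ← Complex.ofReal_cos, ← Complex.ofReal_sin]
  have hmeas : AEMeasurable (fun q : ℝ × ℝ ↦ ENNReal.ofReal q.1 * g (circleMap c q.1 q.2))
      (volume.restrict S) :=
    measurable_fst.ennreal_ofReal.aemeasurable.mul
      ((hg.comp (by unfold circleMap; fun_prop) hmaps).aemeasurable hS)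
  calc ∫⁻ s in Ioo 0 R, ENNReal.ofReal s * ∫⁻ θ in Ioo (-π) π, g (circleMap c s θ)
      = ∫⁻ q in S, ENNReal.ofReal q.1 * g (circleMap c q.1 q.2) := by
        rw [Measure.volume_eq_prod, setLIntegral_prod _ hmeas]
        simp_rw [lintegral_const_mul' _ _ ofReal_ne_top]
    _ = ∫⁻ q in S, ENNReal.ofReal q.1 •
          (ball 0 R).indicator (fun u ↦ g (c + u)) (Complex.polarCoord.symm q) := by
        refine setLIntegral_congr_fun hS fun q hq ↦ ?_
        rw [indicator_of_mem, hpolar, smul_eq_mul]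
        simpa [hpolar, dist_eq_norm] using hmaps hq
    _ ≤ ∫⁻ q in polarCoord.target, ENNReal.ofReal q.1 •
          (ball 0 R).indicator (fun u ↦ g (c + u)) (Complex.polarCoord.symm q) :=
        lintegral_mono_set fun q hq ↦ ⟨hq.1.1, hq.2⟩
    _ = ∫⁻ w in ball c R, g w := by
        rw [Complex.lintegral_comp_polarCoord_symm, lintegral_indicator measurableSet_ball,
          ← (measurePreserving_add_left volume c).setLIntegral_comp_preimage_emb
            (measurableEmbedding_addLeft c) g (ball c R)]
        simp

def HasDiskSubmeanPropertyOn (f : ℂ → ℝ≥0∞) (U : Set ℂ) : Prop :=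
  ∀ z R, ball z R ⊆ U → volume (ball z R) * f z ≤ ∫⁻ w in ball z R, f w

theorem DifferentiableOn.hasDiskSubmeanPropertyOn_norm_rpow {H : ℂ → ℂ} {U : Set ℂ} {p : ℝ}
    (hH : DifferentiableOn ℂ H U) (hp : 1 ≤ p) :
    HasDiskSubmeanPropertyOn (fun z ↦ ENNReal.ofReal (‖H z‖ ^ p)) U := by
  intro z R hzR
  rcases le_or_gt R 0 with hR | hR
  · simp [ball_eq_empty.2 hR]
  have hHR : DifferentiableOn ℂ H (ball z R) := hH.mono hzR
  have hcircle : ∀ s ∈ Ioo 0 R, ENNReal.ofReal (2 * π * ‖H z‖ ^ p) ≤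
      ∫⁻ θ in Ioo (-π) π, ENNReal.ofReal (‖H (circleMap z s θ)‖ ^ p) := by
    intro s ⟨hs, hsR⟩
    have hsub : closedBall z s ⊆ ball z R := closedBall_subset_ball hsR
    have hHs : DiffContOnCl ℂ H (ball z s) :=
      ⟨hHR.mono (ball_subset_closedBall.trans hsub),
        hHR.continuousOn.mono (closure_ball z hs.ne' ▸ hsub)⟩
    have hint : IntegrableOn (fun θ ↦ ‖H (circleMap z s θ)‖ ^ p) (Ioo (-π) π) := by
      refine (Continuous.integrableOn_Icc ?_).mono_set Ioo_subset_Icc_self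
      exact ((hHR.continuousOn.norm.rpow_const fun _ _ ↦ Or.inr (by linarith)).comp_continuous
        (continuous_circleMap z s) fun θ ↦ hsub (circleMap_mem_closedBall z hs.le θ))
    rw [← ofReal_integral_eq_lintegral_ofReal hint
        (Filter.Eventually.of_forall fun _ ↦ by positivity),
      integral_Ioo_circleMap (fun w ↦ ‖H w‖ ^ p)]
    gcongr
    exact norm_rpow_le_circleAverage hs hHs hp
  calc volume (ball z R) * ENNReal.ofReal (‖H z‖ ^ p)
      = ∫⁻ s in Ioo 0 R, ENNReal.ofReal s * ENNReal.ofReal (2 * π * ‖H z‖ ^ p) := by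
        rw [lintegral_mul_const' _ _ ofReal_ne_top, setLIntegral_ofReal_Ioo_zero hR.le,
          Complex.volume_ball_eq_ofReal z hR.le, ← ofReal_mul (by positivity),
          ← ofReal_mul (by positivity)]
        congr 1
        ring
    _ ≤ ∫⁻ s in Ioo 0 R, ENNReal.ofReal s *
          ∫⁻ θ in Ioo (-π) π, ENNReal.ofReal (‖H (circleMap z s θ)‖ ^ p) :=
        setLIntegral_mono' measurableSet_Ioo fun s hs ↦ by gcongr; exact hcircle s hs
    _ ≤ ∫⁻ w in ball z R, ENNReal.ofReal (‖H w‖ ^ p) :=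
        lintegral_circle_le_setLIntegral_ball
          (ENNReal.continuous_ofReal.comp_continuousOn
            (hHR.continuousOn.norm.rpow_const fun _ _ ↦ Or.inr (by linarith)))

theorem mul_setLIntegral_le_of_le_setLIntegral_ball {E : Type*} [PseudoMetricSpace E]
    [MeasurableSpace E] [OpensMeasurableSpace E] [SecondCountableTopology E]
    {μ : Measure E} [SFinite μ] {f : E → ℝ≥0∞} {A U : Set E} {R : ℝ} {c : ℝ≥0∞}
    (hA : MeasurableSet A) (hf : AEMeasurable f (μ.restrict U))
    (hAU : ∀ z ∈ A, ball z R ⊆ U) (hmean : ∀ z ∈ A, c * f z ≤ ∫⁻ w in ball z R, f w ∂μ) :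
    c * ∫⁻ z in A, f z ∂μ ≤ μ A * ∫⁻ w in U, f w ∂μ := by
  have hS : MeasurableSet {q : E × E | dist q.2 q.1 < R} :=
    measurableSet_lt (measurable_snd.dist measurable_fst) measurable_const
  have hball : ∀ z ∈ A, ∫⁻ w in ball z R, f w ∂μ = ∫⁻ w in U, (ball z R).indicator f w ∂μ := by
    intro z hz
    rw [lintegral_indicator measurableSet_ball, Measure.restrict_restrict measurableSet_ball,
      inter_eq_left.2 (hAU z hz)]
  calc c * ∫⁻ z in A, f z ∂μ
      ≤ ∫⁻ z in A, c * f z ∂μ := lintegral_const_mul_le c f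
    _ ≤ ∫⁻ z in A, ∫⁻ w in U, (ball z R).indicator f w ∂μ ∂μ :=
        setLIntegral_mono' hA fun z hz ↦ (hmean z hz).trans (hball z hz).le
    -- `(ball z R).indicator f w` is `{q | dist q.2 q.1 < R}.indicator (f ∘ Prod.snd) (z, w)`
    _ = ∫⁻ w in U, ∫⁻ z in A, (ball z R).indicator f w ∂μ ∂μ :=
        lintegral_lintegral_swap (hf.comp_snd.indicator hS)
    _ ≤ ∫⁻ w in U, μ A * f w ∂μ := by
        refine lintegral_mono fun w ↦ ?_
        calc ∫⁻ z in A, (ball z R).indicator f w ∂μ ≤ ∫⁻ _ in A, f w ∂μ :=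
              lintegral_mono fun z ↦ indicator_le_self _ _ w
          _ = μ A * f w := by rw [setLIntegral_const, mul_comm]
    _ = μ A * ∫⁻ w in U, f w ∂μ := lintegral_const_mul'' _ hf

theorem setLIntegral_ball_eq_add_annulus {E : Type*} [PseudoMetricSpace E] [MeasurableSpace E]
    [OpensMeasurableSpace E] {μ : Measure E} (f : E → ℝ≥0∞) (x : E) {a b : ℝ} (hab : a ≤ b) :
    ∫⁻ z in ball x b, f z ∂μ = ∫⁻ z in ball x a, f z ∂μ + ∫⁻ z in ball x b \ ball x a, f z ∂μ := by
  rw [← lintegral_union (measurableSet_ball.diff measurableSet_ball) disjoint_sdiff_right,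
    union_sdiff_cancel (ball_subset_ball hab)]

namespace HasDiskSubmeanPropertyOn

variable {f : ℂ → ℝ≥0∞} {z₀ : ℂ} {ε : ℝ}

theorem setLIntegral_annulus_le (hf : HasDiskSubmeanPropertyOn f (ball z₀ ε))
    (hfm : AEMeasurable f (volume.restrict (ball z₀ ε))) {a b R c : ℝ} (ha : 0 ≤ a) (hab : a ≤ b)
    (hR : 0 < R) (hbR : b + R ≤ ε) (hc : b ^ 2 - a ^ 2 ≤ c * R ^ 2) :
    ∫⁻ z in ball z₀ b \ ball z₀ a, f z ≤ ENNReal.ofReal c * ∫⁻ z in ball z₀ ε, f z := by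
  set A := ball z₀ b \ ball z₀ a
  have hAU : ∀ z ∈ A, ball z R ⊆ ball z₀ ε := fun z hz ↦
    ball_subset_ball' (by linarith [mem_ball.1 hz.1])
  have hvolA : volume A = ENNReal.ofReal (π * (b ^ 2 - a ^ 2)) := by
    rw [measure_sdiff (ball_subset_ball hab) measurableSet_ball.nullMeasurableSet
        measure_ball_lt_top.ne,
      Complex.volume_ball_eq_ofReal _ (ha.trans hab), Complex.volume_ball_eq_ofReal _ ha,
      ← ofReal_sub _ (by positivity), mul_sub]
  have hmean := mul_setLIntegral_le_of_le_setLIntegral_ball (c := volume (ball z₀ R))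
    (measurableSet_ball.diff measurableSet_ball) hfm hAU fun z hz ↦ by
      simpa only [Complex.volume_ball] using hf z R (hAU z hz)
  have hvolR : volume (ball z₀ R) = ENNReal.ofReal (π * R ^ 2) :=
    Complex.volume_ball_eq_ofReal _ hR.le
  refine (ENNReal.mul_le_mul_iff_right (hvolR ▸ (ofReal_pos.2 (by positivity)).ne')
    (hvolR ▸ ofReal_ne_top)).mp (hmean.trans ?_)
  rw [hvolA, hvolR, ← mul_assoc, ← ofReal_mul (by positivity)]
  gcongr ENNReal.ofReal ?_ * _
  nlinarith [pi_pos]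

theorem setLIntegral_ball_half_le (hf : HasDiskSubmeanPropertyOn f (ball z₀ ε))
    (hfm : AEMeasurable f (volume.restrict (ball z₀ ε))) (hε : 0 < ε)
    (hfin : ∫⁻ z in ball z₀ (ε / 2), f z ≠ ∞) :
    ∫⁻ z in ball z₀ (ε / 2), f z ≤ 4 * ∫⁻ z in ball z₀ ε \ ball z₀ (ε / 2), f z := by
  have hI : ∫⁻ z in ball z₀ (ε / 2), f z ≤
      ENNReal.ofReal (1 / 25 + 3 / 16 + 5 / 9) * ∫⁻ z in ball z₀ ε, f z := by
    calc ∫⁻ z in ball z₀ (ε / 2), f z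
        = (∫⁻ z in ball z₀ (ε / 6) \ ball z₀ 0, f z) +
            (∫⁻ z in ball z₀ (ε / 3) \ ball z₀ (ε / 6), f z) +
            ∫⁻ z in ball z₀ (ε / 2) \ ball z₀ (ε / 3), f z := by
          rw [setLIntegral_ball_eq_add_annulus f z₀ (a := ε / 3) (by linarith),
            setLIntegral_ball_eq_add_annulus f z₀ (a := ε / 6) (b := ε / 3) (by linarith),
            ball_zero, sdiff_empty]
      _ ≤ ENNReal.ofReal (1 / 25) * (∫⁻ z in ball z₀ ε, f z) +
            ENNReal.ofReal (3 / 16) * (∫⁻ z in ball z₀ ε, f z) +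
            ENNReal.ofReal (5 / 9) * ∫⁻ z in ball z₀ ε, f z := by
          gcongr
          · exact hf.setLIntegral_annulus_le hfm le_rfl (by positivity) (R := 5 * ε / 6)
              (by positivity) (by linarith) (le_of_eq (by ring))
          · exact hf.setLIntegral_annulus_le hfm (by positivity) (by linarith) (R := 2 * ε / 3)
              (by positivity) (by linarith) (le_of_eq (by ring))
          · exact hf.setLIntegral_annulus_le hfm (by positivity) (by linarith) (R := ε / 2)
              (by positivity) (by linarith) (le_of_eq (by ring))
      _ = _ := by
          rw [ofReal_add (by norm_num) (by norm_num), ofReal_add (by norm_num) (by norm_num)]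
          ring
  set I := ∫⁻ z in ball z₀ (ε / 2), f z
  set J := ∫⁻ z in ball z₀ ε \ ball z₀ (ε / 2), f z
  rw [setLIntegral_ball_eq_add_annulus f z₀ (a := ε / 2) (by linarith)] at hI
  have h5 : I + 4 * I ≤ 4 * I + 4 * J := calc
    I + 4 * I = 5 * I := by ring
    _ ≤ 5 * (ENNReal.ofReal (1 / 25 + 3 / 16 + 5 / 9) * (I + J)) := by gcongr
    _ ≤ 4 * (I + J) := by
        rw [← mul_assoc]
        gcongr
        rw [← ofReal_ofNat 5, ← ofReal_ofNat 4, ← ofReal_mul (by norm_num)]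
        exact ofReal_le_ofReal (by norm_num)
    _ = 4 * I + 4 * J := mul_add _ _ _
  rw [add_comm] at h5
  exact (ENNReal.add_le_add_iff_left (mul_ne_top ofNat_ne_top hfin)).mp h5

end HasDiskSubmeanPropertyOn

/-- **Caccioppoli-type estimate for holomorphic functions.**
If `H` is holomorphic on the disk `B(z₀, ε)`, then the `L^p` mass of `H` on the half
disk `B(z₀, ε/2)` is at most four times its `L^p` mass on the annulus
`B(z₀, ε) ∖ B(z₀, ε/2)` (an inequality in `[0,∞]`). -/
theorem caccioppoli_holomorphic_disk
    (z₀ : ℂ) (ε : ℝ) (hε : 0 < ε) (p : ℝ) (hp : 1 ≤ p)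
    (H : ℂ → ℂ) (hH : DifferentiableOn ℂ H (Metric.ball z₀ ε)) :
    (∫⁻ z in Metric.ball z₀ (ε / 2), ENNReal.ofReal (‖H z‖ ^ p)) ≤
      4 * ∫⁻ z in Metric.ball z₀ ε \ Metric.ball z₀ (ε / 2),
        ENNReal.ofReal (‖H z‖ ^ p) := by
  have hcont : ContinuousOn (fun z ↦ ‖H z‖ ^ p) (ball z₀ ε) :=
    hH.continuousOn.norm.rpow_const fun _ _ ↦ Or.inr (by linarith)
  have hfin : ∫⁻ z in ball z₀ (ε / 2), ENNReal.ofReal (‖H z‖ ^ p) ≠ ∞ := by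
    refine (lt_of_le_of_lt (lintegral_mono_set ball_subset_closedBall) ?_).ne
    exact ((hcont.mono (closedBall_subset_ball (by linarith))).integrableOn_compact
      (isCompact_closedBall z₀ (ε / 2))).lintegral_lt_top
  exact (hH.hasDiskSubmeanPropertyOn_norm_rpow hp).setLIntegral_ball_half_le
    ((ENNReal.continuous_ofReal.comp_continuousOn hcont).aemeasurable measurableSet_ball) hε hfin
end
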